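/- arXiv:1508.02280 — 2 statements merged into one kernel-verified Lean document; each statement's English description precedes it below -/
import Mathlib

section
/- There exist real constants C1, C2 such that for all real numbers a, c with a ≥ 1 and c ≥ a + 1 the following holds: let Q(a,c) = (cosh(a)·cosh(c) + 1)/(sinh(a)·sinh(c)), let b ≥ 0 be defined by cosh(b) = Q(a,c) (i.e. b = arcosh(Q(a,c))), and let d = arcosh(sinh(b)·sinh(c)). Then C1 + c − a ≤ d ≤ C2 + c − a. -/
/-- The inverse hyperbolic cosine, for `x ≥ 1`. -/
noncomputable def arcosh (x : ℝ) : ℝ := Real.log (x + Real.sqrt (x ^ 2 - 1))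

/-!
Since `Q(a,c)² - 1 = ((cosh a + cosh c) / (sinh a sinh c))²`, the quantity inside the outer
`arcosh` is `sinh b · sinh c = (cosh a + cosh c) / sinh a`. For `1/2 ≤ a ≤ c` this lies
between `e^(c-a)` and `8 e^(c-a)`, because `e^a / 4 ≤ sinh a ≤ e^a / 2` and `cosh c ≤ e^c`.
As `log x ≤ arcosh x ≤ log (2x)` for `x ≥ 1`, this gives `c - a ≤ d ≤ log 16 + c - a`.
-/

theorem arcosh_eq_real_arcosh : arcosh = Real.arcosh := rfl

namespace Real

lemma log_le_arcosh {x : ℝ} (hx : 1 ≤ x) : log x ≤ Real.arcosh x := by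
  rw [log_le_iff_le_exp (by linarith), exp_arcosh hx]
  exact le_add_of_nonneg_right (sqrt_nonneg _)

lemma arcosh_le_log_two_mul {x : ℝ} (hx : 1 ≤ x) : Real.arcosh x ≤ log (2 * x) := by
  rw [le_log_iff_exp_le (by linarith), exp_arcosh hx, two_mul, add_le_add_iff_left,
    sqrt_le_iff]
  constructor <;> nlinarith

lemma cosh_mul_cosh_add_one_sq_sub_sinh_mul_sinh_sq (a c : ℝ) :
    (cosh a * cosh c + 1) ^ 2 - (sinh a * sinh c) ^ 2 = (cosh a + cosh c) ^ 2 := by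
  linear_combination (cosh c ^ 2 - 1) * cosh_sq a + sinh a ^ 2 * cosh_sq c

lemma sinh_arcosh_cosh_mul_cosh_add_one_div_mul_sinh {a c : ℝ} (ha : 0 < a) (hc : 0 < c) :
    sinh (Real.arcosh ((cosh a * cosh c + 1) / (sinh a * sinh c))) * sinh c
      = (cosh a + cosh c) / sinh a := by
  have hQ : 1 ≤ (cosh a * cosh c + 1) / (sinh a * sinh c) := by
    rw [one_le_div (by positivity)]
    linarith [cosh_sub a c, one_le_cosh (a - c)]
  have hQ_sq_sub_one : ((cosh a * cosh c + 1) / (sinh a * sinh c)) ^ 2 - 1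
      = ((cosh a + cosh c) / (sinh a * sinh c)) ^ 2 := by
    rw [div_pow, div_pow, ← cosh_mul_cosh_add_one_sq_sub_sinh_mul_sinh_sq]
    field_simp
  rw [sinh_arcosh hQ, hQ_sq_sub_one, sqrt_sq (by positivity)]
  field_simp

lemma exp_sub_le_cosh_add_cosh_div_sinh {a : ℝ} (ha : 0 < a) (c : ℝ) :
    exp (c - a) ≤ (cosh a + cosh c) / sinh a := by
  rw [le_div_iff₀ (sinh_pos_iff.2 ha)]
  have hexp : exp (c - a) * exp a = exp c := by rw [← exp_add, sub_add_cancel]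
  have hsinh_le : sinh a ≤ exp a / 2 := by
    rw [sinh_eq]; linarith [exp_pos (-a)]
  calc exp (c - a) * sinh a ≤ exp (c - a) * (exp a / 2) := by gcongr
    _ = exp c / 2 := by rw [mul_div_assoc', hexp]
    _ ≤ cosh a + cosh c := by rw [cosh_eq c]; linarith [exp_pos (-c), cosh_pos a]

lemma exp_div_four_le_sinh {a : ℝ} (ha : 1 / 2 ≤ a) : exp a / 4 ≤ sinh a := by
  have htwo : 2 ≤ exp (2 * a) :=
    calc (2 : ℝ) ≤ exp 1 := by linarith [add_one_le_exp 1]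
      _ ≤ exp (2 * a) := exp_le_exp.2 (by linarith)
  have hexp : exp a = exp (2 * a) * exp (-a) := by rw [← exp_add]; ring_nf
  rw [sinh_eq]
  nlinarith [exp_pos (-a)]

lemma cosh_add_cosh_div_sinh_le {a c : ℝ} (ha : 1 / 2 ≤ a) (hac : a ≤ c) :
    (cosh a + cosh c) / sinh a ≤ 8 * exp (c - a) := by
  have hcosh_le : cosh a ≤ cosh c := by
    rw [cosh_le_cosh, abs_of_nonneg (by linarith), abs_of_nonneg (by linarith)]
    exact hac
  have hcosh_c : cosh c ≤ exp c := by
    rw [cosh_eq]; linarith [exp_le_exp.2 (show -c ≤ c by linarith)]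
  have hexp : exp (c - a) * exp a = exp c := by rw [← exp_add, sub_add_cancel]
  rw [div_le_iff₀ (sinh_pos_iff.2 (by linarith))]
  calc cosh a + cosh c ≤ 2 * exp c := by linarith
    _ = 8 * exp (c - a) * (exp a / 4) := by rw [← hexp]; ring
    _ ≤ 8 * exp (c - a) * sinh a := by gcongr; exact exp_div_four_le_sinh ha

end Real

/-- Pentagon lemma (Lemma 8.1): there are constants `C1`, `C2` such that for all
`a ≥ 1` and `c ≥ a + 1`, with `cosh b = Q(a,c)` (the pentagon relation) and
`d = arcosh (sinh b * sinh c)`, one has `C1 + c - a ≤ d ≤ C2 + c - a`. -/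
theorem pentagon_lemma :
    ∃ C1 C2 : ℝ, ∀ a c : ℝ, 1 ≤ a → a + 1 ≤ c →
      let Q := (Real.cosh a * Real.cosh c + 1) / (Real.sinh a * Real.sinh c)
      let b := arcosh Q
      let d := arcosh (Real.sinh b * Real.sinh c)
      C1 + c - a ≤ d ∧ d ≤ C2 + c - a := by
  refine ⟨0, Real.log 16, fun a c ha hc => ?_⟩
  simp only [arcosh_eq_real_arcosh]
  rw [Real.sinh_arcosh_cosh_mul_cosh_add_one_div_mul_sinh (by linarith) (by linarith)]
  set S := (Real.cosh a + Real.cosh c) / Real.sinh a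
  have hS_lower : Real.exp (c - a) ≤ S :=
    Real.exp_sub_le_cosh_add_cosh_div_sinh (by linarith) c
  have hS_upper : S ≤ 8 * Real.exp (c - a) :=
    Real.cosh_add_cosh_div_sinh_le (by linarith) (by linarith)
  have hS_one : 1 ≤ S := le_trans (Real.one_le_exp (by linarith)) hS_lower
  constructor
  · calc 0 + c - a = Real.log (Real.exp (c - a)) := by rw [Real.log_exp]; ring
      _ ≤ Real.log S := Real.log_le_log (Real.exp_pos _) hS_lower
      _ ≤ Real.arcosh S := Real.log_le_arcosh hS_one
  · calc Real.arcosh S ≤ Real.log (2 * S) := Real.arcosh_le_log_two_mul hS_one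
      _ ≤ Real.log (16 * Real.exp (c - a)) := Real.log_le_log (by positivity) (by linarith)
      _ = Real.log 16 + c - a := by
        rw [Real.log_mul (by norm_num) (Real.exp_ne_zero _), Real.log_exp]; ring
end

section
/- There exists a constant C > 0 such that for all real numbers a, c with a ≥ 1 and c > a, the quantity Q(a,c) = (cosh(a)·cosh(c) + 1)/(sinh(a)·sinh(c)) satisfies 1 + e^{−2a} ≤ Q(a,c) ≤ 1 + C·e^{−2a}. -/
/-!
Since `cosh a cosh c - sinh a sinh c = cosh (c - a)`, we have
`Q(a,c) - 1 = (1 + cosh (c - a)) / (sinh a sinh c)`. The numerator lies between `e^{c-a}/2` and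
`2 e^{c-a}`, while `sinh a sinh c` is at most `e^{a+c}/4` and, once `a` is bounded away from `0`,
at least `e^{a+c}/16`; so `Q(a,c) - 1` is comparable to `e^{-2a}`, with `C = 32`.
-/

open Real

namespace Real

lemma sinh_le_exp_div_two (x : ℝ) : sinh x ≤ exp x / 2 := by
  rw [sinh_eq]
  linarith [exp_pos (-x)]

lemma exp_div_two_le_cosh (x : ℝ) : exp x / 2 ≤ cosh x := by
  rw [cosh_eq]
  linarith [exp_pos (-x)]

lemma cosh_le_exp {x : ℝ} (hx : 0 ≤ x) : cosh x ≤ exp x := by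
  rw [cosh_eq]
  linarith [exp_le_exp.2 (neg_le_self hx)]

lemma exp_div_four_le_sinh_s4 {x : ℝ} (hx : log 2 ≤ 2 * x) : exp x / 4 ≤ sinh x := by
  have h : 2 * exp (-x) ≤ exp x := by
    calc 2 * exp (-x) = exp (log 2 + -x) := by rw [exp_add, exp_log two_pos]
      _ ≤ exp x := exp_le_exp.2 (by linarith)
  rw [sinh_eq]
  linarith

end Real

noncomputable def pentagonQ (a c : ℝ) : ℝ :=
  (cosh a * cosh c + 1) / (sinh a * sinh c)

lemma pentagonQ_eq_one_add {a c : ℝ} (h : sinh a * sinh c ≠ 0) :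
    pentagonQ a c = 1 + (1 + cosh (c - a)) / (sinh a * sinh c) := by
  rw [pentagonQ, cosh_sub, one_add_div h]
  ring

lemma exp_neg_two_mul_mul_exp_mul_exp (a c : ℝ) :
    exp (-2 * a) * (exp a * exp c) = exp (c - a) := by
  rw [← exp_add, ← exp_add]
  ring_nf

lemma sinh_mul_sinh_pos {a c : ℝ} (ha : 0 < a) (hc : 0 < c) : 0 < sinh a * sinh c :=
  mul_pos (sinh_pos_iff.2 ha) (sinh_pos_iff.2 hc)

lemma one_add_exp_neg_two_mul_le_pentagonQ {a c : ℝ} (ha : 0 < a) (hc : 0 < c) :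
    1 + exp (-2 * a) ≤ pentagonQ a c := by
  have hS := sinh_mul_sinh_pos ha hc
  rw [pentagonQ_eq_one_add hS.ne', add_le_add_iff_left, le_div_iff₀ hS]
  have hsinh : sinh a * sinh c ≤ exp a * exp c / 4 := by
    nlinarith [sinh_le_exp_div_two a, sinh_le_exp_div_two c, sinh_pos_iff.2 ha, exp_pos c]
  calc exp (-2 * a) * (sinh a * sinh c)
      ≤ exp (-2 * a) * (exp a * exp c / 4) := by gcongr
    _ = exp (c - a) / 4 := by rw [← exp_neg_two_mul_mul_exp_mul_exp]; ring
    _ ≤ 1 + cosh (c - a) := by linarith [exp_div_two_le_cosh (c - a), exp_pos (c - a)]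

lemma pentagonQ_le_one_add_mul_exp_neg_two_mul {a c : ℝ} (ha : log 2 ≤ 2 * a) (hac : a ≤ c) :
    pentagonQ a c ≤ 1 + 32 * exp (-2 * a) := by
  have ha0 : 0 < a := by linarith [log_pos one_lt_two]
  have hS := sinh_mul_sinh_pos ha0 (ha0.trans_le hac)
  rw [pentagonQ_eq_one_add hS.ne', add_le_add_iff_left, div_le_iff₀ hS]
  have hsinh : exp a * exp c / 16 ≤ sinh a * sinh c := by
    nlinarith [exp_div_four_le_sinh_s4 ha, exp_div_four_le_sinh_s4 (ha.trans (by linarith : 2 * a ≤ 2 * c)),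
      exp_pos a, exp_pos c]
  have hd : 0 ≤ c - a := sub_nonneg.2 hac
  calc 1 + cosh (c - a) ≤ 2 * exp (c - a) := by
        linarith [one_le_exp hd, cosh_le_exp hd]
    _ = 32 * exp (-2 * a) * (exp a * exp c / 16) := by
        rw [← exp_neg_two_mul_mul_exp_mul_exp]; ring
    _ ≤ 32 * exp (-2 * a) * (sinh a * sinh c) := by gcongr

/-- Intermediate estimate in the proof of the pentagon lemma (Lemma 8.1):
`1 + e^{-2a} ≤ Q(a,c) ≤ 1 + C e^{-2a}`. -/
theorem pentagon_cosh_estimate :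
    ∃ C : ℝ, 0 < C ∧ ∀ a c : ℝ, 1 ≤ a → a < c →
      let Q := (Real.cosh a * Real.cosh c + 1) / (Real.sinh a * Real.sinh c)
      1 + Real.exp (-2 * a) ≤ Q ∧ Q ≤ 1 + C * Real.exp (-2 * a) := by
  refine ⟨32, by norm_num, fun a c ha hac => ?_⟩
  show 1 + exp (-2 * a) ≤ pentagonQ a c ∧ pentagonQ a c ≤ 1 + 32 * exp (-2 * a)
  have ha0 : 0 < a := by linarith
  have hlog : log 2 ≤ 2 * a := by linarith [log_two_lt_d9]
  exact ⟨one_add_exp_neg_two_mul_le_pentagonQ ha0 (ha0.trans hac),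
    pentagonQ_le_one_add_mul_exp_neg_two_mul hlog hac.le⟩
end
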